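/- Let F be a submodular function on V with F(∅) = 0 and f its Lovász extension. Then min_{x ∈ ℝ^V} [ f(x) + (1/2)‖x‖² ] = max_{y ∈ B(F)} − (1/2)‖y‖², both optima are attained, the minimizer x* of the left-hand problem is unique, the maximizer y* of the right-hand problem is the orthogonal projection of the origin onto the compact convex set B(F), and x* = − y*. -/

import Mathlib

open Finset
open Finset

def Submodular {n : ℕ} (F : Finset (Fin n) → ℝ) : Prop :=
  ∀ S T : Finset (Fin n), F (S ∪ T) + F (S ∩ T) ≤ F S + F T

def basePolytope {n : ℕ} (F : Finset (Fin n) → ℝ) : Set (Fin n → ℝ) :=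
  {y | (∀ S : Finset (Fin n), ∑ i ∈ S, y i ≤ F S) ∧ ∑ i, y i = F Finset.univ}

def SortsDesc {n : ℕ} (x : Fin n → ℝ) (σ : Equiv.Perm (Fin n)) : Prop :=
  ∀ j k : Fin n, j ≤ k → x (σ k) ≤ x (σ j)

def lovaszVal {n : ℕ} (F : Finset (Fin n) → ℝ) (x : Fin n → ℝ) (σ : Equiv.Perm (Fin n)) : ℝ :=
  ∑ k : Fin n, x (σ k) *
    (F ((Finset.univ.filter (fun j => j ≤ k)).image ⇑σ)
      - F ((Finset.univ.filter (fun j => j < k)).image ⇑σ))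

def IsLovasz {n : ℕ} (F : Finset (Fin n) → ℝ) (f : (Fin n → ℝ) → ℝ) : Prop :=
  ∀ (x : Fin n → ℝ) (σ : Equiv.Perm (Fin n)), SortsDesc x σ → f x = lovaszVal F x σ

/-!
For a submodular `F` with `F ∅ = 0`, the Lovász extension is the support function of the base
polytope, `f x = max_{y ∈ B(F)} ⟪x, y⟫`: Abel summation bounds `⟪x, y⟫` by `f x` on `B(F)`, and
Edmonds' greedy vector of a permutation sorting `x` lies in `B(F)` (by submodularity) and attains it.
Hence `f x + ½‖x‖² ≥ ⟪x, y⟫ + ½‖x‖² = ½‖x + y‖² - ½‖y‖²` for all `y ∈ B(F)`. For the minimum-norm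
point `y*` of the compact convex set `B(F)`, the variational inequality `‖y*‖² ≤ ⟪y*, w⟫` on `B(F)`
gives `f (-y*) = -‖y*‖²`, so this lower bound is attained, and only at `x = -y*`.
-/

open Filter Topology

lemma nonneg_of_forall_mem_Ioc_nonneg_add_mul {a b : ℝ}
    (h : ∀ t ∈ Set.Ioc (0 : ℝ) 1, 0 ≤ a + t * b) : 0 ≤ a := by
  have hlim : Tendsto (fun t : ℝ => a + t * b) (𝓝[>] 0) (𝓝 a) :=
    ((by fun_prop : Continuous fun t : ℝ => a + t * b).tendsto' 0 a (by simp)).mono_left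
      nhdsWithin_le_nhds
  exact ge_of_tendsto hlim (mem_of_superset (Ioc_mem_nhdsGT one_pos) h)

section MinNorm

variable {ι : Type*} [Fintype ι] {K : Set (ι → ℝ)} {y : ι → ℝ}

lemma dotProduct_self_nonneg (v : ι → ℝ) : 0 ≤ v ⬝ᵥ v :=
  sum_nonneg fun i _ => mul_self_nonneg (v i)

lemma sum_sq_eq_dotProduct_self (v : ι → ℝ) : ∑ i, v i ^ 2 = v ⬝ᵥ v := by
  simp [dotProduct, sq]

lemma IsMinOn.dotProduct_self_le (hK : Convex ℝ K) (hy : y ∈ K)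
    (hmin : IsMinOn (fun z => z ⬝ᵥ z) K y) {w : ι → ℝ} (hw : w ∈ K) :
    y ⬝ᵥ y ≤ y ⬝ᵥ w := by
  suffices 0 ≤ 2 * (y ⬝ᵥ (w - y)) by rw [dotProduct_sub] at this; linarith
  refine nonneg_of_forall_mem_Ioc_nonneg_add_mul (b := (w - y) ⬝ᵥ (w - y)) fun t ht => ?_
  have hle : y ⬝ᵥ y ≤ (y + t • (w - y)) ⬝ᵥ (y + t • (w - y)) :=
    hmin (hK.add_smul_sub_mem hy hw (Set.Ioc_subset_Icc_self ht))
  simp only [add_dotProduct, dotProduct_add, smul_dotProduct, dotProduct_smul, smul_eq_mul,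
    dotProduct_comm (w - y) y] at hle
  nlinarith [ht.1]

lemma IsMinOn.eq_of_dotProduct_self_eq (hK : Convex ℝ K) (hy : y ∈ K)
    (hmin : IsMinOn (fun z => z ⬝ᵥ z) K y) {z : ι → ℝ} (hz : z ∈ K)
    (h : z ⬝ᵥ z = y ⬝ᵥ y) : z = y := by
  have hyz := hmin.dotProduct_self_le hK hy hz
  have hsq : (z - y) ⬝ᵥ (z - y) ≤ 0 := by
    simp only [sub_dotProduct, dotProduct_sub, dotProduct_comm z y]
    linarith
  exact sub_eq_zero.mp (dotProduct_self_eq_zero.mp (le_antisymm hsq (dotProduct_self_nonneg _)))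

end MinNorm

section SupportFunction

variable {ι : Type*} [Fintype ι] {K : Set (ι → ℝ)} {f : (ι → ℝ) → ℝ} {y : ι → ℝ}

lemma IsMinOn.apply_neg_eq_of_isGreatest (hK : Convex ℝ K) (hy : y ∈ K)
    (hmin : IsMinOn (fun z => z ⬝ᵥ z) K y) (hf : ∀ x, IsGreatest ((x ⬝ᵥ ·) '' K) (f x)) :
    f (-y) = -(y ⬝ᵥ y) := by
  refine (hf (-y)).unique ⟨⟨y, hy, neg_dotProduct y y⟩, ?_⟩
  rintro _ ⟨w, hw, rfl⟩
  simpa [neg_dotProduct] using hmin.dotProduct_self_le hK hy hw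

lemma neg_half_dotProduct_self_add_le (hy : y ∈ K) (hf : ∀ x, IsGreatest ((x ⬝ᵥ ·) '' K) (f x))
    (x : ι → ℝ) :
    -(1 / 2) * (y ⬝ᵥ y) + (1 / 2) * ((x + y) ⬝ᵥ (x + y)) ≤ f x + (1 / 2) * (x ⬝ᵥ x) := by
  have := (hf x).2 ⟨y, hy, rfl⟩
  simp only [add_dotProduct, dotProduct_add, dotProduct_comm y x]
  linarith

end SupportFunction

lemma Submodular.sub_le_sub_of_subset {n : ℕ} {F : Finset (Fin n) → ℝ} (hF : Submodular F)
    {A B : Finset (Fin n)} (hAB : A ⊆ B) {i : Fin n} (hi : i ∉ B) :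
    F (insert i B) - F B ≤ F (insert i A) - F A := by
  have h := hF (insert i A) B
  rw [insert_union, union_eq_right.mpr hAB, insert_inter_of_notMem hi,
    inter_eq_left.mpr hAB] at h
  linarith

lemma sum_range_mul_sub_nonneg {n : ℕ} {c d : ℕ → ℝ} (hc : ∀ k, k + 1 < n → c (k + 1) ≤ c k)
    (hd : ∀ k, 0 ≤ d k) (hd0 : d 0 = 0) (hdn : d n = 0) :
    0 ≤ ∑ k ∈ range n, c k * (d (k + 1) - d k) := by
  have hpartial : ∀ k, ∑ j ∈ range k, (d (j + 1) - d j) = d k := fun k => by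
    rw [sum_range_sub, hd0, sub_zero]
  have := sum_range_by_parts c (fun k => d (k + 1) - d k) n
  simp only [smul_eq_mul, hpartial, hdn, mul_zero, zero_sub] at this
  rw [this, neg_nonneg]
  exact sum_nonpos fun k hk => mul_nonpos_of_nonpos_of_nonneg
    (sub_nonpos.mpr (hc k (by rw [mem_range] at hk; omega))) (hd _)

namespace Equiv.Perm

variable {n : ℕ} (σ : Equiv.Perm (Fin n))

def prefixSet (m : ℕ) : Finset (Fin n) :=
  (univ.filter fun j : Fin n => (j : ℕ) < m).image σ

@[simp] lemma prefixSet_zero : σ.prefixSet 0 = ∅ := by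
  simp [prefixSet]

@[simp] lemma prefixSet_self : σ.prefixSet n = univ := by
  ext i
  simp [prefixSet]

lemma apply_notMem_prefixSet (k : Fin n) : σ k ∉ σ.prefixSet k := by
  simp [prefixSet]

lemma prefixSet_succ (k : Fin n) : σ.prefixSet (k + 1) = insert (σ k) (σ.prefixSet k) := by
  ext i
  simp only [prefixSet, mem_image, mem_filter, mem_univ, true_and, mem_insert]
  constructor
  · rintro ⟨j, hj, rfl⟩
    rcases Nat.lt_succ_iff_lt_or_eq.mp hj with h | h
    · exact Or.inr ⟨j, h, rfl⟩
    · exact Or.inl (congrArg σ (Fin.ext h))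
  · rintro (rfl | ⟨j, hj, rfl⟩)
    · exact ⟨k, Nat.lt_succ_self _, rfl⟩
    · exact ⟨j, Nat.lt_succ_of_lt hj, rfl⟩

lemma sum_sub_prefixSet (G : Finset (Fin n) → ℝ) :
    ∑ k : Fin n, (G (σ.prefixSet (k + 1)) - G (σ.prefixSet k)) = G univ - G ∅ := by
  rw [Fin.sum_univ_eq_sum_range (fun m => G (σ.prefixSet (m + 1)) - G (σ.prefixSet m)),
    sum_range_sub (fun m => G (σ.prefixSet m)), prefixSet_self, prefixSet_zero]

end Equiv.Perm

open Equiv.Perm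

variable {n : ℕ} {F : Finset (Fin n) → ℝ}

lemma lovaszVal_eq_sum_prefixSet (F : Finset (Fin n) → ℝ) (x : Fin n → ℝ)
    (σ : Equiv.Perm (Fin n)) :
    lovaszVal F x σ = ∑ k : Fin n, x (σ k) * (F (σ.prefixSet (k + 1)) - F (σ.prefixSet k)) := by
  refine sum_congr rfl fun k _ => ?_
  simp only [prefixSet, Fin.le_iff_val_le_val, Fin.lt_def, Nat.lt_succ_iff]

def greedy (F : Finset (Fin n) → ℝ) (σ : Equiv.Perm (Fin n)) : Fin n → ℝ :=
  fun i => F (σ.prefixSet (σ.symm i + 1)) - F (σ.prefixSet (σ.symm i))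

@[simp] lemma greedy_apply_perm (F : Finset (Fin n) → ℝ) (σ : Equiv.Perm (Fin n)) (k : Fin n) :
    greedy F σ (σ k) = F (σ.prefixSet (k + 1)) - F (σ.prefixSet k) := by
  simp [greedy]

lemma dotProduct_greedy (F : Finset (Fin n) → ℝ) (x : Fin n → ℝ) (σ : Equiv.Perm (Fin n)) :
    x ⬝ᵥ greedy F σ = lovaszVal F x σ := by
  rw [lovaszVal_eq_sum_prefixSet, dotProduct, ← Equiv.sum_comp σ]
  simp

lemma sum_greedy (hF0 : F ∅ = 0) (σ : Equiv.Perm (Fin n)) : ∑ i, greedy F σ i = F univ := by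
  rw [← Equiv.sum_comp σ]
  simp only [greedy_apply_perm]
  rw [σ.sum_sub_prefixSet, hF0, sub_zero]

lemma greedy_mem_basePolytope (hF0 : F ∅ = 0) (hF : Submodular F) (σ : Equiv.Perm (Fin n)) :
    greedy F σ ∈ basePolytope F := by
  refine ⟨fun S => ?_, sum_greedy hF0 σ⟩
  have hmarginal : ∀ k : Fin n, (if σ k ∈ S then greedy F σ (σ k) else 0)
      ≤ F (S ∩ σ.prefixSet (k + 1)) - F (S ∩ σ.prefixSet k) := fun k => by
    rw [greedy_apply_perm, σ.prefixSet_succ]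
    split_ifs with hk
    · rw [inter_insert_of_mem hk]
      exact hF.sub_le_sub_of_subset inter_subset_right (σ.apply_notMem_prefixSet k)
    · rw [inter_insert_of_notMem hk, sub_self]
  calc ∑ i ∈ S, greedy F σ i = ∑ k : Fin n, if σ k ∈ S then greedy F σ (σ k) else 0 := by
        rw [Equiv.sum_comp σ (fun i => if i ∈ S then greedy F σ i else 0), sum_ite_mem,
          univ_inter]
    _ ≤ ∑ k : Fin n, (F (S ∩ σ.prefixSet (k + 1)) - F (S ∩ σ.prefixSet k)) :=
        sum_le_sum fun k _ => hmarginal k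
    _ = F S := by
        rw [σ.sum_sub_prefixSet (fun T => F (S ∩ T)), inter_univ, inter_empty, hF0, sub_zero]

lemma dotProduct_le_lovaszVal (hF0 : F ∅ = 0) {x y : Fin n → ℝ} {σ : Equiv.Perm (Fin n)}
    (hσ : SortsDesc x σ) (hy : y ∈ basePolytope F) : x ⬝ᵥ y ≤ lovaszVal F x σ := by
  -- Abel summation against the slacks `d m = F(Pₘ) - y(Pₘ) ≥ 0` of the prefix sets.
  set d : ℕ → ℝ := fun m => F (σ.prefixSet m) - ∑ i ∈ σ.prefixSet m, y i
  set c : ℕ → ℝ := fun m => if h : m < n then x (σ ⟨m, h⟩) else 0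
  have hdiff : lovaszVal F x σ - x ⬝ᵥ y = ∑ m ∈ range n, c m * (d (m + 1) - d m) := by
    rw [lovaszVal_eq_sum_prefixSet, dotProduct, ← Equiv.sum_comp σ (fun i => x i * y i),
      ← sum_sub_distrib, ← Fin.sum_univ_eq_sum_range (fun m => c m * (d (m + 1) - d m))]
    refine sum_congr rfl fun k _ => ?_
    simp only [c, d, k.isLt, dif_pos, Fin.eta, σ.prefixSet_succ,
      sum_insert (σ.apply_notMem_prefixSet k)]
    ring
  have hc : ∀ k, k + 1 < n → c (k + 1) ≤ c k := fun k hk => by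
    simp only [c, dif_pos hk, dif_pos (Nat.lt_of_succ_lt hk)]
    exact hσ ⟨k, _⟩ ⟨k + 1, hk⟩ (Fin.mk_le_mk.mpr k.le_succ)
  have := sum_range_mul_sub_nonneg (d := d) hc (fun m => sub_nonneg.mpr (hy.1 _))
    (by simp [d, hF0]) (by simp [d, hy.2])
  linarith

lemma exists_sortsDesc (x : Fin n → ℝ) : ∃ σ : Equiv.Perm (Fin n), SortsDesc x σ :=
  ⟨Tuple.sort (-x), fun _ _ hjk => neg_le_neg_iff.mp (Tuple.monotone_sort (-x) hjk)⟩

lemma IsLovasz.isGreatest_image_dotProduct (hF0 : F ∅ = 0) (hF : Submodular F) {f : (Fin n → ℝ) → ℝ}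
    (hf : IsLovasz F f) (x : Fin n → ℝ) : IsGreatest ((x ⬝ᵥ ·) '' basePolytope F) (f x) := by
  obtain ⟨σ, hσ⟩ := exists_sortsDesc x
  rw [hf x σ hσ]
  exact ⟨⟨greedy F σ, greedy_mem_basePolytope hF0 hF σ, dotProduct_greedy F x σ⟩,
    by rintro _ ⟨y, hy, rfl⟩; exact dotProduct_le_lovaszVal hF0 hσ hy⟩

lemma basePolytope_eq_iInter (F : Finset (Fin n) → ℝ) :
    basePolytope F = (⋂ S, {y | ∑ i ∈ S, y i ≤ F S}) ∩ {y | ∑ i, y i = F univ} := by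
  ext y
  simp [basePolytope]

lemma convex_basePolytope (F : Finset (Fin n) → ℝ) : Convex ℝ (basePolytope F) := by
  have hlin : ∀ S : Finset (Fin n), IsLinearMap ℝ fun y : Fin n → ℝ => ∑ i ∈ S, y i :=
    fun S => ⟨fun y z => by simp [sum_add_distrib], fun a y => by simp [mul_sum]⟩
  rw [basePolytope_eq_iInter]
  exact (convex_iInter fun S => convex_halfSpace_le (hlin S) _).inter
    (convex_hyperplane (hlin univ) _)

lemma isCompact_basePolytope (F : Finset (Fin n) → ℝ) : IsCompact (basePolytope F) := by
  have hclosed : IsClosed (basePolytope F) := by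
    rw [basePolytope_eq_iInter]
    exact (isClosed_iInter fun S => isClosed_le (by fun_prop) continuous_const).inter
      (isClosed_eq (by fun_prop) continuous_const)
  refine (isCompact_Icc (a := fun i => F univ - F (univ.erase i)) (b := fun i => F {i})
    ).of_isClosed_subset hclosed fun y hy => ?_
  refine ⟨fun i => ?_, fun i => by simpa using hy.1 {i}⟩
  have := hy.1 (univ.erase i)
  have := sum_erase_add univ y (mem_univ i)
  simp only
  linarith [hy.2]

/-- proximal problem and projection of the origin onto `B(F)`:
`min_x [f(x) + ½‖x‖²] = max_{y ∈ B(F)} −½‖y‖²`, both optima attained, the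
minimizer `x*` is unique, the maximizer `y*` is unique and is the orthogonal
projection of `0` onto the compact convex set `B(F)`, and `x* = −y*`. -/
theorem statement7 {n : ℕ} (F : Finset (Fin n) → ℝ) (hF0 : F ∅ = 0) (hF : Submodular F)
    (f : (Fin n → ℝ) → ℝ) (hf : IsLovasz F f) :
    ∃ xstar ystar : Fin n → ℝ,
      IsLeast (Set.range (fun x : Fin n → ℝ => f x + (1/2) * ∑ i, (x i)^2))
        (f xstar + (1/2) * ∑ i, (xstar i)^2) ∧
      (∀ x : Fin n → ℝ,
        f x + (1/2) * ∑ i, (x i)^2 = f xstar + (1/2) * ∑ i, (xstar i)^2 → x = xstar) ∧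
      ystar ∈ basePolytope F ∧
      IsGreatest ((fun y : Fin n → ℝ => -(1/2) * ∑ i, (y i)^2) '' basePolytope F)
        (-(1/2) * ∑ i, (ystar i)^2) ∧
      (∀ y ∈ basePolytope F,
        -(1/2) * ∑ i, (y i)^2 = -(1/2) * ∑ i, (ystar i)^2 → y = ystar) ∧
      f xstar + (1/2) * ∑ i, (xstar i)^2 = -(1/2) * ∑ i, (ystar i)^2 ∧
      IsCompact (basePolytope F) ∧ Convex ℝ (basePolytope F) ∧
      (∀ z ∈ basePolytope F, ∑ i, (ystar i)^2 ≤ ∑ i, (z i)^2) ∧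
      xstar = -ystar := by
  have hK := convex_basePolytope F
  have hsupport := hf.isGreatest_image_dotProduct hF0 hF
  obtain ⟨y, hy, hmin⟩ := (isCompact_basePolytope F).exists_isMinOn
    ⟨greedy F 1, greedy_mem_basePolytope hF0 hF 1⟩
    (by fun_prop : Continuous fun z : Fin n → ℝ => z ⬝ᵥ z).continuousOn
  have hval : f (-y) + (1 / 2) * (-y ⬝ᵥ -y) = -(1 / 2) * (y ⬝ᵥ y) := by
    rw [hmin.apply_neg_eq_of_isGreatest hK hy hsupport, neg_dotProduct, dotProduct_neg, neg_neg]
    ring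
  have hgap := neg_half_dotProduct_self_add_le hy hsupport
  simp only [sum_sq_eq_dotProduct_self]
  refine ⟨-y, y, ⟨⟨-y, rfl⟩, ?_⟩, fun x hx => ?_, hy, ⟨⟨y, hy, rfl⟩, ?_⟩,
    fun z hz h => hmin.eq_of_dotProduct_self_eq hK hy hz (by linarith), hval,
    isCompact_basePolytope F, hK, fun z hz => hmin hz, rfl⟩
  · rintro _ ⟨x, rfl⟩
    linarith [hgap x, dotProduct_self_nonneg (x + y)]
  · have hzero : (x + y) ⬝ᵥ (x + y) = 0 := le_antisymm (by linarith [hgap x]) (dotProduct_self_nonneg _)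
    exact eq_neg_of_add_eq_zero_left (dotProduct_self_eq_zero.mp hzero)
  · rintro _ ⟨z, hz, rfl⟩
    linarith [show y ⬝ᵥ y ≤ z ⬝ᵥ z from hmin hz]
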